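/- arXiv:1809.01067 — 5 statements merged into one kernel-verified Lean document; each statement's English description precedes it below -/
import Mathlib

section
/- Let (N, [·,…,·], α) be a multiplicative n-Hom-Lie algebra, and let X = (x₁,…,x_{n−1}) ∈ N^{n−1} satisfy α(x_i) = x_i for all i. For k ≥ 1 define ad^k_X(y) = [x₁,…,x_{n−1}, α^k(y)]. Then ad^k_X is an α^{k+1}-derivation of N, i.e., ad^k_X ∘ α = α ∘ ad^k_X and ad^k_X([y₁,…,y_n]) = ∑_{i=1}^n [α^{k+1}(y₁),…, ad^k_X(y_i), …, α^{k+1}(y_n)]. -/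
/-- In a multiplicative (n+1)-Hom-Lie algebra (N, [·,…,·], α), if
X = (x₁,…,x_n) satisfies α(x_i) = x_i and k ≥ 1, then
ad^k_X(y) = [x₁,…,x_n, α^k(y)] is an α^{k+1}-derivation: it commutes with α and
satisfies the α^{k+1}-Leibniz rule. -/
theorem adk_is_alpha_k_succ_derivation {K : Type*} [Field K] [CharZero K]
    {N : Type*} [AddCommGroup N] [Module K N]
    (n : ℕ) (br : MultilinearMap K (fun _ : Fin (n + 1) => N) N) (α : Module.End K N)
    (hskew : ∀ (x : Fin (n + 1) → N) (i j : Fin (n + 1)), i ≠ j → x i = x j → br x = 0)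
    (hmult : ∀ x : Fin (n + 1) → N, α (br x) = br (fun i => α (x i)))
    (hNambu : ∀ (x : Fin n → N) (y : Fin (n + 1) → N),
      br (Fin.snoc (fun i => α (x i)) (br y)) =
        ∑ i : Fin (n + 1),
          br (Function.update (fun j => α (y j)) i (br (Fin.snoc x (y i)))))
    (x : Fin n → N) (hx : ∀ i, α (x i) = x i) (k : ℕ) (hk : 1 ≤ k) :
    (∀ y : N, br (Fin.snoc x ((α ^ k) (α y))) = α (br (Fin.snoc x ((α ^ k) y)))) ∧
    (∀ y : Fin (n + 1) → N,
      br (Fin.snoc x ((α ^ k) (br y))) =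
        ∑ i : Fin (n + 1),
          br (Function.update (fun j => (α ^ (k + 1)) (y j)) i
            (br (Fin.snoc x ((α ^ k) (y i)))))) := by

  have hmultk : ∀ (m : ℕ) (y : Fin (n + 1) → N),
      (α ^ m) (br y) = br (fun i => (α ^ m) (y i)) := by
    intro m
    induction m with
    | zero => intro y; simp
    | succ m ih =>
      intro y
      have h1 : (α ^ (m + 1)) (br y) = (α ^ m) (α (br y)) := by
        rw [pow_succ]; rfl
      rw [h1, hmult, ih]
      exact congrArg br (funext fun i => by rw [pow_succ]; rfl)
  have hcomm : ∀ (m : ℕ) (z : N), (α ^ m) (α z) = α ((α ^ m) z) := by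
    intro m z
    calc (α ^ m) (α z) = (α ^ m * α) z := rfl
      _ = (α * α ^ m) z := by rw [pow_mul_comm']
      _ = α ((α ^ m) z) := rfl
  have hsnoc : ∀ z : N,
      (fun i => α ((Fin.snoc x z : Fin (n + 1) → N) i)) = Fin.snoc x (α z) := by
    intro z
    funext i
    refine Fin.lastCases ?_ ?_ i
    · simp
    · intro j; simp [hx j]
  constructor
  · intro y
    rw [hmult, hsnoc, hcomm]
  · intro y
    rw [hmultk k y]
    have h := hNambu x (fun j => (α ^ k) (y j))
    have hxfix : (fun i => α (x i)) = x := funext hx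
    rw [hxfix] at h
    have hk1 : (fun j => α ((α ^ k) (y j))) = fun j => (α ^ (k + 1)) (y j) := by
      funext j; rw [pow_succ']; rfl
    rw [hk1] at h
    exact h
end

section
/- Let (g, [·,·], α) be a multiplicative Hom-Lie algebra and φ ∈ g* a linear form satisfying φ∘α = φ and φ(x)φ([y,z]) + φ(y)φ([z,x]) + φ(z)φ([x,y]) = 0 for all x,y,z ∈ g. Then g with the triple bracket [x,y,z] = φ(x)[y,z] + φ(y)[z,x] + φ(z)[x,y] and twisting maps (α, α) is a multiplicative 3-Hom-Lie algebra; that is, the ternary Hom-Nambu identity [α(x₁),α(x₂),[y₁,y₂,y₃]] = ∑_{i=1}^3 [α(y₁),…,[x₁,x₂,y_i],…,α(y₃)] holds. -/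
/-- The triple product [x,y,z] = φ(x)[y,z] + φ(y)[z,x] + φ(z)[x,y]. -/
noncomputable def tripleProd {K g : Type*} [Field K] [AddCommGroup g] [Module K g]
    (b : g →ₗ[K] g →ₗ[K] g) (φ : g →ₗ[K] K) (x y z : g) : g :=
  φ x • b y z + φ y • b z x + φ z • b x y

/-- If (g,[·,·],α) is a multiplicative Hom-Lie algebra and φ ∈ g*
satisfies φ∘α = φ and φ(x)φ([y,z]) + φ(y)φ([z,x]) + φ(z)φ([x,y]) = 0, then g
with the triple bracket [x,y,z] = φ(x)[y,z]+φ(y)[z,x]+φ(z)[x,y] and twisting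
(α,α) satisfies the ternary Hom-Nambu identity, so it is a multiplicative
3-Hom-Lie algebra. -/
theorem tripleProd_homNambu {K g : Type*} [Field K] [CharZero K] [AddCommGroup g] [Module K g]
    (b : g →ₗ[K] g →ₗ[K] g) (α : g →ₗ[K] g)
    (hskew : ∀ x y, b x y = - b y x)
    (hJac : ∀ x y z : g, b (α x) (b y z) + b (α y) (b z x) + b (α z) (b x y) = 0)
    (hmult : ∀ x y, α (b x y) = b (α x) (α y))
    (φ : g →ₗ[K] K)
    (hφα : ∀ x, φ (α x) = φ x)
    (hφ : ∀ x y z : g, φ x * φ (b y z) + φ y * φ (b z x) + φ z * φ (b x y) = 0) :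
    ∀ x₁ x₂ y₁ y₂ y₃ : g,
      tripleProd b φ (α x₁) (α x₂) (tripleProd b φ y₁ y₂ y₃) =
        tripleProd b φ (tripleProd b φ x₁ x₂ y₁) (α y₂) (α y₃)
        + tripleProd b φ (α y₁) (tripleProd b φ x₁ x₂ y₂) (α y₃)
        + tripleProd b φ (α y₁) (α y₂) (tripleProd b φ x₁ x₂ y₃) := by
  intro x₁ x₂ y₁ y₂ y₃
  have Jc : ∀ u v w : g, b (α u) (b v w) = b (α v) (b u w) - b (α w) (b u v) := by
    intro u v w
    have h := hJac u v w
    rw [hskew w u] at h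
    simp only [map_neg] at h
    linear_combination (norm := module) h
  have hT := hφ y₁ y₂ y₃
  rw [hskew y₃ y₁] at hT; simp only [map_neg] at hT
  have hS₁ := hφ x₁ x₂ y₁
  rw [hskew y₁ x₁] at hS₁; simp only [map_neg] at hS₁
  have hS₂ := hφ x₁ x₂ y₂
  rw [hskew y₂ x₁] at hS₂; simp only [map_neg] at hS₂
  have hS₃ := hφ x₁ x₂ y₃
  rw [hskew y₃ x₁] at hS₃; simp only [map_neg] at hS₃
  simp only [tripleProd, map_add, map_smul, map_neg, LinearMap.add_apply,
    LinearMap.smul_apply, LinearMap.neg_apply, hφα, smul_eq_mul,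
    hskew y₃ y₁, hskew y₁ x₁, hskew y₂ x₁, hskew y₃ x₁,
    hskew (b y₂ y₃) (α x₁), hskew (b y₁ y₃) (α x₁), hskew (b y₁ y₂) (α x₁),
    hskew (b x₂ y₁) (α y₂), hskew (b x₁ y₁) (α y₂), hskew (b x₁ x₂) (α y₂),
    hskew (b x₂ y₂) (α y₃), hskew (b x₁ y₂) (α y₃), hskew (b x₁ x₂) (α y₃),
    hskew (b x₂ y₃) (α y₁), hskew (b x₁ y₃) (α y₁), hskew (b x₁ x₂) (α y₁),
    smul_neg, neg_neg, mul_neg, neg_smul]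
  rw [Jc x₂ y₂ y₃, Jc x₂ y₁ y₃, Jc x₂ y₁ y₂, Jc x₁ y₂ y₃, Jc x₁ y₁ y₃, Jc x₁ y₁ y₂]
  match_scalars
  all_goals
    first
    | ring1
    | (linear_combination hT)
    | (linear_combination -hT)
    | (linear_combination hS₁)
    | (linear_combination -hS₁)
    | (linear_combination hS₂)
    | (linear_combination -hS₂)
    | (linear_combination hS₃)
    | (linear_combination -hS₃)
end

section
/- Let (g, [·,·], α) be a multiplicative Hom-Lie algebra. Then g with the ternary bracket [x,y,z] := [[x,y], α(z)] and twisting map α² is a multiplicative Hom-Lie triple system: (1) [x,x,z] = 0; (2) [x,y,z] + [y,z,x] + [z,x,y] = 0; (3) [α²(u),α²(v),[x,y,z]] = [[u,v,x],α²(y),α²(z)] + [α²(x),[u,v,y],α²(z)] + [α²(x),α²(y),[u,v,z]]; and α² preserves the ternary bracket. -/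
/-- for a multiplicative Hom-Lie algebra (g,[·,·],α), the ternary
bracket [x,y,z] := [[x,y],α(z)] together with the twisting map α² makes g a
multiplicative Hom-Lie triple system. -/
theorem homLie_to_homLieTripleSystem {K g : Type*} [Field K] [CharZero K]
    [AddCommGroup g] [Module K g]
    (b : g →ₗ[K] g →ₗ[K] g) (α : g →ₗ[K] g)
    (hskew : ∀ x y, b x y = - b y x)
    (hJac : ∀ x y z : g, b (α x) (b y z) + b (α y) (b z x) + b (α z) (b x y) = 0)
    (hmult : ∀ x y, α (b x y) = b (α x) (α y)) :
    (∀ x z : g, b (b x x) (α z) = 0) ∧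
    (∀ x y z : g,
      b (b x y) (α z) + b (b y z) (α x) + b (b z x) (α y) = 0) ∧
    (∀ u v x y z : g,
      b (b (α (α u)) (α (α v))) (α (b (b x y) (α z))) =
        b (b (b (b u v) (α x)) (α (α y))) (α (α (α z)))
        + b (b (α (α x)) (b (b u v) (α y))) (α (α (α z)))
        + b (b (α (α x)) (α (α y))) (α (b (b u v) (α z)))) ∧
    (∀ x y z : g,
      α (α (b (b x y) (α z))) =
        b (b (α (α x)) (α (α y))) (α (α (α z)))) := by
  have hxx : ∀ x : g, b x x = 0 := by
    intro x
    have h := hskew x x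
    have h2 : (2 : K) • b x x = 0 := by
      rw [two_smul]
      nth_rewrite 2 [h]
      exact add_neg_cancel _
    rcases smul_eq_zero.mp h2 with h' | h'
    · exact absurd h' two_ne_zero
    · exact h'
  have A : ∀ u v x y : g,
      b (b (α u) (α v)) (b (α x) (α y)) =
        b (b (b u v) (α x)) (α (α y)) + b (α (α x)) (b (b u v) (α y)) := by
    intro u v x y
    have h := hJac (b u v) (α x) (α y)
    rw [hmult u v, hskew (α y) (b u v), hskew (α (α y)) (b (b u v) (α x)),
      map_neg] at h
    have h' : b (b (α u) (α v)) (b (α x) (α y))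
        - b (α (α x)) (b (b u v) (α y)) - b (b (b u v) (α x)) (α (α y)) = 0 := by
      rw [← h]; abel
    linear_combination (norm := abel) h'
  refine ⟨?_, ?_, ?_, ?_⟩
  · intro x z
    rw [hxx x, map_zero, LinearMap.zero_apply]
  · intro x y z
    have h := hJac x y z
    rw [hskew (α x) (b y z), hskew (α y) (b z x), hskew (α z) (b x y)] at h
    linear_combination (norm := abel) -h
  · intro u v x y z
    rw [hmult (b x y) (α z), A (α u) (α v) (b x y) (α z), hmult x y,
      A u v x y, map_add, LinearMap.add_apply, hmult (α x) (α y),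
      ← hmult u v, ← hmult (b u v) (α z)]
  · intro x y z
    rw [hmult (b x y) (α z), hmult x y, hmult (b (α x) (α y)) (α (α z)),
      hmult (α x) (α y)]
end

section
/- Let (G, [·,…,·]) be a Lie n-uplet system and α: G → G a linear map with α([x₁,…,x_n]) = [α(x₁),…,α(x_n)]. Define [x₁,…,x_n]_α = [α(x₁),…,α(x_n)]. Then (G, [·,…,·]_α, α) is a Hom-Lie n-uplet system. -/
/-- The twisted bracket [x₁,…,x_n]_α := [α(x₁),…,α(x_n)]. -/
noncomputable def twistedBracket {K G : Type*} [Field K]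
    [AddCommGroup G] [Module K G] {m : ℕ}
    (br : MultilinearMap K (fun _ : Fin (m + 2) => G) G) (α : G →ₗ[K] G)
    (x : Fin (m + 2) → G) : G :=
  br (fun i => α (x i))

/-- if (G,[·,…,·]) is a Lie n-uplet system (n = m+2) and α is a
linear map with α([x₁,…,x_n]) = [α(x₁),…,α(x_n)], then (G,[·,…,·]_α,α) is a
Hom-Lie n-uplet system. -/
theorem lieNUplet_twist {K G : Type*} [Field K] [CharZero K]
    [AddCommGroup G] [Module K G]
    (m : ℕ) (br : MultilinearMap K (fun _ : Fin (m + 2) => G) G)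
    (h1 : ∀ x : Fin (m + 2) → G, x 0 = x 1 → br x = 0)
    (h2 : ∀ (x : Fin (m + 1) → G) (y : Fin (m + 2) → G),
      br (Fin.snoc x (br y)) =
        ∑ i : Fin (m + 2), br (Function.update y i (br (Fin.snoc x (y i)))))
    (α : G →ₗ[K] G)
    (hα : ∀ x : Fin (m + 2) → G, α (br x) = br (fun i => α (x i))) :
    (∀ x : Fin (m + 2) → G, x 0 = x 1 → twistedBracket br α x = 0) ∧
    (∀ (x : Fin (m + 1) → G) (y : Fin (m + 2) → G),
      twistedBracket br α
          (Fin.snoc (fun i => α (x i)) (twistedBracket br α y)) =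
        ∑ i : Fin (m + 2),
          twistedBracket br α
            (Function.update (fun j => α (y j)) i
              (twistedBracket br α (Fin.snoc x (y i))))) := by
  constructor
  · intro x hx
    exact h1 _ (by simp [hx])
  · intro x y
    have comp_snoc : ∀ (p : Fin (m + 1) → G) (b : G),
        (fun i : Fin (m + 2) => α ((Fin.snoc p b : Fin (m + 2) → G) i)) = Fin.snoc (fun i => α (p i)) (α b) := by
      intro p b
      show (α : G → G) ∘ Fin.snoc p b = _
      rw [Fin.comp_snoc]; rfl
    have comp_upd : ∀ (f : Fin (m + 2) → G) (i : Fin (m + 2)) (v : G),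
        (fun j => α (Function.update f i v j)) = Function.update (fun j => α (f j)) i (α v) := by
      intro f i v
      show (α : G → G) ∘ Function.update f i v = _
      rw [Function.comp_update]; rfl
    have L : twistedBracket br α (Fin.snoc (fun i => α (x i)) (twistedBracket br α y))
        = br (Fin.snoc (fun i => α (α (x i))) (br (fun i => α (α (y i))))) := by
      unfold twistedBracket
      rw [comp_snoc, hα]
    rw [L, h2]
    refine Finset.sum_congr rfl fun i _ => ?_
    unfold twistedBracket
    rw [comp_upd, comp_snoc, hα, comp_snoc]
end

section
/- Let (N, [·,…,·], α) be a multiplicative n-ary Hom-Nambu algebra. If D is an α^k-derivation and D′ is an α^{k′}-derivation of N, then their commutator [D,D′] = D∘D′ − D′∘D is an α^{k+k′}-derivation of N. -/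
/-! The product `D D'` applied to a bracket expands into a double sum. The terms where both
derivations hit the same slot give `[x₁, …, D D' xᵢ, …]`; the terms where they hit different slots
`i ≠ j` give `[…, αᵏ D' xᵢ, …, αᵏ' D xⱼ, …]`, because each derivation commutes with `α`. That cross
sum is symmetric in `(D, k) ↔ (D', k')`, so it cancels in `D D' - D' D`. -/

open Finset Function

theorem sum_sum_compl_update_update_comm {ι M N : Type*} [Fintype ι] [DecidableEq ι]
    [AddCommMonoid N] (f : (ι → M) → N) (c a b : ι → M) :
    ∑ i, ∑ j ∈ {i}ᶜ, f (update (update c i (a i)) j (b j)) =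
      ∑ i, ∑ j ∈ {i}ᶜ, f (update (update c i (b i)) j (a j)) := by
  rw [Finset.sum_comm' (t' := univ) (s' := fun j => {j}ᶜ) (fun i j => by simp [ne_comm])]
  refine sum_congr rfl fun i _ => sum_congr rfl fun j hj => ?_
  rw [update_comm (by simpa [eq_comm] using hj)]

section

variable {R ι M : Type*} [Semiring R] [AddCommGroup M] [Module R M] [Fintype ι] [DecidableEq ι]

def IsHomDerivation (br : MultilinearMap R (fun _ : ι => M) M) (α : Module.End R M) (k : ℕ)
    (D : Module.End R M) : Prop :=
  Commute D α ∧ ∀ x : ι → M, D (br x) = ∑ i, br (update (fun j => (α ^ k) (x j)) i (D (x i)))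

variable {br : MultilinearMap R (fun _ : ι => M) M} {α : Module.End R M} {k k' : ℕ}
  {D D' : Module.End R M}

namespace IsHomDerivation

theorem apply_update (hD : IsHomDerivation br α k D) (y : ι → M) (i : ι) (z : M) :
    D (br (update y i z)) =
      ∑ j, br (update (update (⇑(α ^ k) ∘ y) i ((α ^ k) z)) j (D (update y i z j))) := by
  rw [hD.2, ← comp_update]
  rfl

theorem mul_apply (hD : IsHomDerivation br α k D) (hD' : IsHomDerivation br α k' D')
    (x : ι → M) :
    (D * D') (br x) =
      ∑ i, br (update (⇑(α ^ (k + k')) ∘ x) i ((D * D') (x i))) +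
        ∑ i, ∑ j ∈ {i}ᶜ,
          br (update (update (⇑(α ^ (k + k')) ∘ x) i ((α ^ k) (D' (x i)))) j
            ((α ^ k') (D (x j)))) := by
  have hpow : (⇑(α ^ k) ∘ fun j => (α ^ k') (x j)) = ⇑(α ^ (k + k')) ∘ x := by
    rw [pow_add]
    rfl
  rw [Module.End.mul_apply, hD'.2, map_sum, ← sum_add_distrib]
  refine sum_congr rfl fun i _ => ?_
  rw [hD.apply_update, hpow, Fintype.sum_eq_add_sum_compl i, update_idem, update_self]
  refine congrArg _ (sum_congr rfl fun j hj => ?_)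
  rw [update_of_ne (by simpa using hj),
    show D ((α ^ k') (x j)) = (α ^ k') (D (x j)) from LinearMap.congr_fun (hD.1.pow_right k').eq _]

theorem lie (hD : IsHomDerivation br α k D) (hD' : IsHomDerivation br α k' D') :
    IsHomDerivation br α (k + k') ⁅D, D'⁆ := by
  rw [Ring.lie_def]
  refine ⟨(hD.1.mul_left hD'.1).sub_left (hD'.1.mul_left hD.1), fun x => ?_⟩
  rw [LinearMap.sub_apply, hD.mul_apply hD', hD'.mul_apply hD, add_comm k' k,
    sum_sum_compl_update_update_comm, add_sub_add_right_eq_sub, ← sum_sub_distrib]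
  refine sum_congr rfl fun i _ => ?_
  rw [← br.map_update_sub]
  rfl

end IsHomDerivation

end

theorem commutator_derivation_general {K N : Type*} [Field K]
    [AddCommGroup N] [Module K N]
    (m : ℕ) (br : MultilinearMap K (fun _ : Fin (m + 1) => N) N) (α : Module.End K N)
    (k k' : ℕ) (D D' : Module.End K N)
    (hDα : ∀ x, D (α x) = α (D x))
    (hD'α : ∀ x, D' (α x) = α (D' x))
    (hD : ∀ x : Fin (m + 1) → N,
      D (br x) = ∑ i : Fin (m + 1),
        br (Function.update (fun j => (α ^ k) (x j)) i (D (x i))))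
    (hD' : ∀ x : Fin (m + 1) → N,
      D' (br x) = ∑ i : Fin (m + 1),
        br (Function.update (fun j => (α ^ k') (x j)) i (D' (x i)))) :
    (∀ x, (D ∘ₗ D' - D' ∘ₗ D) (α x) = α ((D ∘ₗ D' - D' ∘ₗ D) x)) ∧
    (∀ x : Fin (m + 1) → N,
      (D ∘ₗ D' - D' ∘ₗ D) (br x) =
        ∑ i : Fin (m + 1),
          br (Function.update (fun j => (α ^ (k + k')) (x j)) i
            ((D ∘ₗ D' - D' ∘ₗ D) (x i)))) := by
  have hDer : IsHomDerivation br α k D := ⟨LinearMap.ext hDα, hD⟩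
  have hDer' : IsHomDerivation br α k' D' := ⟨LinearMap.ext hD'α, hD'⟩
  obtain ⟨hcomm, hleibniz⟩ := hDer.lie hDer'
  rw [Ring.lie_def] at hcomm hleibniz
  exact ⟨LinearMap.congr_fun hcomm, hleibniz⟩

/-- in a multiplicative n-ary Hom-Nambu algebra (N,[·,…,·],α)
(arity n = m+1), if D is an α^k-derivation and D′ an α^{k′}-derivation, then
[D,D′] = D∘D′ − D′∘D is an α^{k+k′}-derivation. -/
theorem commutator_derivation {K N : Type*} [Field K] [CharZero K]
    [AddCommGroup N] [Module K N]
    (m : ℕ) (br : MultilinearMap K (fun _ : Fin (m + 1) => N) N) (α : Module.End K N)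
    (hmult : ∀ x : Fin (m + 1) → N, α (br x) = br (fun i => α (x i)))
    (hNambu : ∀ (x : Fin m → N) (y : Fin (m + 1) → N),
      br (Fin.snoc (fun i => α (x i)) (br y)) =
        ∑ i : Fin (m + 1),
          br (Function.update (fun j => α (y j)) i (br (Fin.snoc x (y i)))))
    (k k' : ℕ) (D D' : Module.End K N)
    (hDα : ∀ x, D (α x) = α (D x))
    (hD'α : ∀ x, D' (α x) = α (D' x))
    (hD : ∀ x : Fin (m + 1) → N,
      D (br x) = ∑ i : Fin (m + 1),
        br (Function.update (fun j => (α ^ k) (x j)) i (D (x i))))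
    (hD' : ∀ x : Fin (m + 1) → N,
      D' (br x) = ∑ i : Fin (m + 1),
        br (Function.update (fun j => (α ^ k') (x j)) i (D' (x i)))) :
    (∀ x, (D ∘ₗ D' - D' ∘ₗ D) (α x) = α ((D ∘ₗ D' - D' ∘ₗ D) x)) ∧
    (∀ x : Fin (m + 1) → N,
      (D ∘ₗ D' - D' ∘ₗ D) (br x) =
        ∑ i : Fin (m + 1),
          br (Function.update (fun j => (α ^ (k + k')) (x j)) i
            ((D ∘ₗ D' - D' ∘ₗ D) (x i)))) :=
  commutator_derivation_general m br α k k' D D' hDα hD'α hD hD'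
end
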